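/- arXiv:2501.15652 — 3 statements merged into one kernel-verified Lean document; each statement's English description precedes it below -/
import Mathlib

section
/- In the scalar case with (1−λ) a² ≥ 1 and q > 0, the sequence S_n = (1−λ) a² S_{n−1} + q with S_0 ≥ 0 diverges to infinity; consequently, for an unstable scalar system (a² > 1) there exists a critical probability below which the lower bound on the expected filtering error grows without bound. -/
open Filter

lemma aux_div (c q : ℝ) (hc : 1 ≤ c) (hq : 0 < q) (S : ℕ → ℝ) (h0 : 0 ≤ S 0)
    (hrec : ∀ n, S (n + 1) = c * S n + q) : Tendsto S atTop atTop := by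
  have hnn : ∀ n, 0 ≤ S n := by
    intro n
    induction n with
    | zero => exact h0
    | succ k ih =>
      rw [hrec]
      have : 0 ≤ c * S k := mul_nonneg (le_trans zero_le_one hc) ih
      linarith
  have hlb : ∀ n : ℕ, (n : ℝ) * q ≤ S n := by
    intro n
    induction n with
    | zero => simpa using h0
    | succ k ih =>
      rw [hrec]
      have h1 : S k ≤ c * S k := le_mul_of_one_le_left (hnn k) hc
      push_cast
      nlinarith
  apply tendsto_atTop_mono hlb
  exact Tendsto.atTop_mul_const hq tendsto_natCast_atTop_atTop

/-- In the scalar unstable case with `(1−λ)a² ≥ 1` and `q > 0`, the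
recursion `S_n = (1−λ)a² S_{n−1} + q` with `S_0 ≥ 0` diverges to infinity;
consequently, for `a² > 1` there is a critical probability below which the lower
bound on the expected filtering error grows without bound. -/
theorem stmt9 (a q lam : ℝ) (ha : 1 < a ^ 2) (hq : 0 < q)
    (hlam : lam ∈ Set.Icc (0 : ℝ) 1) (hdiv : 1 ≤ (1 - lam) * a ^ 2) :
    (∀ S : ℕ → ℝ, 0 ≤ S 0 → (∀ n, S (n + 1) = (1 - lam) * a ^ 2 * S n + q) →
      Tendsto S atTop atTop) ∧
    (∃ lamCrit : ℝ, 0 < lamCrit ∧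
      ∀ lam' ∈ Set.Icc (0 : ℝ) 1, lam' < lamCrit →
        ∀ S : ℕ → ℝ, 0 ≤ S 0 → (∀ n, S (n + 1) = (1 - lam') * a ^ 2 * S n + q) →
          Tendsto S atTop atTop) := by
  constructor
  · intro S h0 hrec
    exact aux_div _ q hdiv hq S h0 hrec
  · refine ⟨1 - 1 / a ^ 2, by
      have : 1 / a ^ 2 < 1 := by rw [div_lt_one (by linarith)]; linarith
      linarith, ?_⟩
    intro lam' hlam' hlt S h0 hrec
    have ha0 : (0:ℝ) < a ^ 2 := by linarith
    have hc : 1 ≤ (1 - lam') * a ^ 2 := by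
      have h1 : 1 / a ^ 2 < 1 - lam' := by linarith
      have := mul_lt_mul_of_pos_right h1 ha0
      rw [one_div, inv_mul_cancel₀ (ne_of_gt ha0)] at this
      linarith
    exact aux_div _ q hc hq S h0 hrec
end

section
/- In the scalar case, the multi-beam Riccati fixed-point equation p = a² p + q − a² p² / (p + γ r) with γ ≥ 1 has a unique nonnegative solution p(γ) whenever a² < 1 or the observation is effective; moreover, when a² < 1 the function γ ↦ p(γ) is nondecreasing and bounded above by q / (1 − a²) as γ → ∞. -/
noncomputable def pfA (a q r γ : ℝ) : ℝ :=
  (q - γ * r * (1 - a ^ 2) + Real.sqrt ((γ * r * (1 - a ^ 2) - q) ^ 2 + 4 * (q * (γ * r)))) / 2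

lemma pfA_facts (a q r γ : ℝ) (ha : a ^ 2 < 1) (hq : 0 < q) (hr : 0 < r) (hγ : 1 ≤ γ) :
    0 < pfA a q r γ ∧
    (pfA a q r γ) ^ 2 + (γ * r * (1 - a ^ 2) - q) * pfA a q r γ - q * (γ * r) = 0 ∧
    0 < pfA a q r γ + (γ * r * (1 - a ^ 2) - q) := by
  have hc : 0 < γ * r := by nlinarith
  set b := γ * r * (1 - a ^ 2) - q with hb
  set s := Real.sqrt (b ^ 2 + 4 * (q * (γ * r))) with hsdef
  have hDnn : (0:ℝ) ≤ b ^ 2 + 4 * (q * (γ * r)) := by nlinarith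
  have hs2 : s ^ 2 = b ^ 2 + 4 * (q * (γ * r)) := Real.sq_sqrt hDnn
  have habs : |b| < s := by
    rw [hsdef, ← Real.sqrt_sq_eq_abs]
    exact Real.sqrt_lt_sqrt (sq_nonneg b) (by nlinarith)
  have h1 : -b < s := lt_of_le_of_lt (neg_le_abs b) habs
  have h2 : b < s := lt_of_le_of_lt (le_abs_self b) habs
  have hpf : pfA a q r γ = (-b + s) / 2 := by
    unfold pfA; rw [← hsdef, hb]; ring
  refine ⟨by rw [hpf]; linarith, ?_, by rw [hpf]; linarith⟩
  rw [hpf]; nlinarith [hs2]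

/-- In the scalar stable case (`a² < 1`), the multi-beam Riccati
fixed-point equation `p = a²p + q − a²p²/(p + γr)` has a unique nonnegative
solution `p(γ)` for each `γ ≥ 1`; moreover `γ ↦ p(γ)` is nondecreasing and
bounded above by `q/(1 − a²)`. -/
theorem stmt12 (a q r : ℝ) (ha : a ^ 2 < 1) (hq : 0 < q) (hr : 0 < r) :
    ∃ pf : ℝ → ℝ,
      (∀ γ : ℝ, 1 ≤ γ →
        (0 ≤ pf γ ∧
          pf γ = a ^ 2 * pf γ + q - a ^ 2 * (pf γ) ^ 2 / (pf γ + γ * r) ∧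
          ∀ p : ℝ, 0 ≤ p → p = a ^ 2 * p + q - a ^ 2 * p ^ 2 / (p + γ * r) → p = pf γ)) ∧
      MonotoneOn pf (Set.Ici 1) ∧
      (∀ γ : ℝ, 1 ≤ γ → pf γ ≤ q / (1 - a ^ 2)) := by
  refine ⟨pfA a q r, ?_, ?_, ?_⟩
  · intro γ hγ
    obtain ⟨hpos, hquad, hadd⟩ := pfA_facts a q r γ ha hq hr hγ
    have hc : 0 < γ * r := by nlinarith
    have hden : pfA a q r γ + γ * r ≠ 0 := by positivity
    refine ⟨le_of_lt hpos, ?_, ?_⟩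
    · field_simp
      nlinarith [hquad]
    · intro p hp hpeq
      have hdenp : p + γ * r ≠ 0 := by positivity
      have hpq : p ^ 2 + (γ * r * (1 - a ^ 2) - q) * p - q * (γ * r) = 0 := by
        field_simp at hpeq
        nlinarith [hpeq]
      -- factor: (p - pf)(p + pf + b) = 0
      nlinarith [hquad, hpq, mul_pos hpos hpos]
  · intro γ1 h1 γ2 h2 h12
    simp only [Set.mem_Ici] at h1 h2
    obtain ⟨hpos1, hquad1, _⟩ := pfA_facts a q r γ1 ha hq hr h1
    obtain ⟨hpos2, hquad2, hadd2⟩ := pfA_facts a q r γ2 ha hq hr h2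
    set p1 := pfA a q r γ1
    set p2 := pfA a q r γ2
    have hc1 : 0 < γ1 * r := by nlinarith
    -- (1 - a²) p1 ≤ q
    have hbnd : (1 - a ^ 2) * p1 ≤ q := by
      nlinarith [hquad1, mul_pos hpos1 hpos1]
    by_contra hlt
    push_neg at hlt
    have h21 : p2 < p1 := hlt
    nlinarith [hquad1, hquad2, mul_pos (sub_pos.mpr h21) (by linarith [hpos1, hadd2] : (0:ℝ) < p1 + p2 + (γ2 * r * (1 - a ^ 2) - q)),
      mul_nonneg (mul_nonneg (sub_nonneg.mpr h12) hr.le) (sub_nonneg.mpr hbnd)]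
  · intro γ hγ
    obtain ⟨hpos, hquad, _⟩ := pfA_facts a q r γ ha hq hr hγ
    have hc : 0 < γ * r := by nlinarith
    rw [le_div_iff₀ (by linarith)]
    nlinarith [hquad, mul_pos hpos hpos]
end

section
/- In the scalar case, the map p ↦ Γ_bs(p, λ) = a² p + q − λ a² p²/(p + r) is concave on p ≥ 0; consequently, by Jensen's inequality, E[Γ_bs(P, λ)] ≤ Γ_bs(E[P], λ) for any nonnegative integrable random variable P. -/
open MeasureTheory Set

/- Since `p² / (p + r) = p - r + r² (p + r)⁻¹` is convex on `(-r, ∞)`, `Γ_bs(·, λ)` is an affine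
function minus a nonnegative multiple of it, hence concave on `(-r, ∞) ⊇ [0, ∞)`. Concavity on an
open interval also gives continuity, and Jensen's inequality finishes. -/

lemma convexOn_inv_add (r : ℝ) : ConvexOn ℝ (Ioi (-r)) fun p : ℝ => (p + r)⁻¹ := by
  have hinv : ConvexOn ℝ (Ioi 0) fun x : ℝ => x⁻¹ := by
    simpa using convexOn_zpow (𝕜 := ℝ) (-1)
  have hset : (fun z => r + z) ⁻¹' Ioi 0 = Ioi (-r) := by
    ext p
    simp [neg_lt_iff_pos_add']
  exact hset ▸ hinv.translate_left r

lemma convexOn_sq_div_add (r : ℝ) : ConvexOn ℝ (Ioi (-r)) fun p : ℝ => p ^ 2 / (p + r) := by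
  refine (((convexOn_id (convex_Ioi _)).add_const (-r)).add
    ((convexOn_inv_add r).smul (sq_nonneg r))).congr fun p hp => ?_
  have hpr : p + r ≠ 0 := by
    have : -r < p := hp
    linarith
  simp only [Pi.add_apply, id, smul_eq_mul]
  field_simp
  ring

lemma concaveOn_add_sub_mul_sq_div_add (a q r lam : ℝ) (hlam : 0 ≤ lam) :
    ConcaveOn ℝ (Ioi (-r)) fun p => a ^ 2 * p + q - lam * a ^ 2 * p ^ 2 / (p + r) := by
  have hlin : ConcaveOn ℝ (Ioi (-r)) fun p : ℝ => a ^ 2 * p + q :=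
    ((concaveOn_id (convex_Ioi _)).smul (sq_nonneg a)).add_const q
  refine (hlin.sub ((convexOn_sq_div_add r).smul (mul_nonneg hlam (sq_nonneg a)))).congr
    fun p _ => ?_
  simp only [Pi.sub_apply, smul_eq_mul]
  ring

theorem stmt19_general (a q r lam : ℝ) (hr : 0 < r)
    (hlam : lam ∈ Set.Icc (0 : ℝ) 1) :
    ConcaveOn ℝ (Set.Ici 0) (fun p => a ^ 2 * p + q - lam * a ^ 2 * p ^ 2 / (p + r)) ∧
    ∀ {Ω : Type} [MeasurableSpace Ω] (μ : Measure Ω) [IsProbabilityMeasure μ]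
      (P : Ω → ℝ), (∀ ω, 0 ≤ P ω) → Integrable P μ →
      Integrable (fun ω => a ^ 2 * P ω + q - lam * a ^ 2 * (P ω) ^ 2 / (P ω + r)) μ →
      ∫ ω, (a ^ 2 * P ω + q - lam * a ^ 2 * (P ω) ^ 2 / (P ω + r)) ∂μ
        ≤ a ^ 2 * (∫ ω, P ω ∂μ) + q
            - lam * a ^ 2 * (∫ ω, P ω ∂μ) ^ 2 / ((∫ ω, P ω ∂μ) + r) := by
  have hsub : Ici (0 : ℝ) ⊆ Ioi (-r) := Ici_subset_Ioi.mpr (neg_neg_of_pos hr)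
  have hconc := concaveOn_add_sub_mul_sq_div_add a q r lam hlam.1
  have hconc₀ := hconc.subset hsub (convex_Ici 0)
  have hcont₀ := (hconc.continuousOn isOpen_Ioi).mono hsub
  exact ⟨hconc₀, fun μ _ P hP hPint hΓint =>
    hconc₀.le_map_integral hcont₀ isClosed_Ici (ae_of_all μ hP) hPint hΓint⟩

/-- In the scalar case, `p ↦ Γ_bs(p, λ) = a²p + q − λa²p²/(p+r)`
is concave on `p ≥ 0`; consequently, by Jensen's inequality,
`E[Γ_bs(P, λ)] ≤ Γ_bs(E[P], λ)` for any nonnegative integrable `P`. -/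
theorem stmt19 (a q r lam : ℝ) (hq : 0 < q) (hr : 0 < r)
    (hlam : lam ∈ Set.Icc (0 : ℝ) 1) :
    ConcaveOn ℝ (Set.Ici 0) (fun p => a ^ 2 * p + q - lam * a ^ 2 * p ^ 2 / (p + r)) ∧
    ∀ {Ω : Type} [MeasurableSpace Ω] (μ : Measure Ω) [IsProbabilityMeasure μ]
      (P : Ω → ℝ), (∀ ω, 0 ≤ P ω) → Integrable P μ →
      Integrable (fun ω => a ^ 2 * P ω + q - lam * a ^ 2 * (P ω) ^ 2 / (P ω + r)) μ →
      ∫ ω, (a ^ 2 * P ω + q - lam * a ^ 2 * (P ω) ^ 2 / (P ω + r)) ∂μ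
        ≤ a ^ 2 * (∫ ω, P ω ∂μ) + q
            - lam * a ^ 2 * (∫ ω, P ω ∂μ) ^ 2 / ((∫ ω, P ω ∂μ) + r) :=
  stmt19_general a q r lam hr hlam
end
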